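/- arXiv:2401.01369 — 4 statements merged into one kernel-verified Lean document; each statement's English description precedes it below -/
import Mathlib

section
/- Let A ⊆ ℝ be a finite nonempty set and v : ℝ → ℝ a function with v monotonically increasing on A (interpreting elements of A as costs, with Value = v(cost)). For λ ≥ 0 define c*(λ) ∈ A as a maximizer of v(c) − λ·c over c ∈ A, with ties broken by choosing the smallest such c. Then λ ↦ c*(λ) is antitone: if 0 ≤ λ₁ ≤ λ₂ then c*(λ₂) ≤ c*(λ₁). -/
/-- The smallest Lagrange-penalized cost maximizer is antitone in the multiplier. -/
theorem stmt_2 (A : Finset ℝ) (hA : A.Nonempty) (v : ℝ → ℝ)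
    (hv : ∀ c₁ ∈ A, ∀ c₂ ∈ A, c₁ ≤ c₂ → v c₁ ≤ v c₂)
    (cstar : ℝ → ℝ)
    (hmem : ∀ lam : ℝ, cstar lam ∈ A)
    (hopt : ∀ lam : ℝ, ∀ c ∈ A, v c - lam * c ≤ v (cstar lam) - lam * cstar lam)
    (htie : ∀ lam : ℝ, ∀ c ∈ A,
      v c - lam * c = v (cstar lam) - lam * cstar lam → cstar lam ≤ c) :
    ∀ lam₁ lam₂ : ℝ, 0 ≤ lam₁ → lam₁ ≤ lam₂ → cstar lam₂ ≤ cstar lam₁ := by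
  intro l1 l2 h0 h12
  by_contra h
  push_neg at h
  set c1 := cstar l1
  set c2 := cstar l2
  have h1 : v c2 - l1 * c2 ≤ v c1 - l1 * c1 := hopt l1 c2 (hmem l2)
  have h2 : v c1 - l2 * c1 ≤ v c2 - l2 * c2 := hopt l2 c1 (hmem l1)
  have key : (l2 - l1) * (c2 - c1) ≤ 0 := by nlinarith
  have hle : l2 ≤ l1 := by nlinarith
  have heq : l1 = l2 := le_antisymm h12 hle
  subst heq
  have heq2 : v c1 - l1 * c1 = v c2 - l1 * c2 := le_antisymm h2 h1
  have := htie l1 c1 (hmem l1) heq2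
  linarith
end

section
/- Let A ⊆ ℝ be a finite nonempty set of positive costs and v : ℝ → ℝ with v(c) > 0 for c ∈ A, v monotonically increasing on A, and c ↦ v(c)/c monotonically decreasing on A. For λ ≥ 0 let c*(λ) be the smallest maximizer of v(c) − λ·c over A. Then the achieved value λ ↦ v(c*(λ)) is antitone in λ. -/
/-- The achieved value v(c*(λ)) of the smallest Lagrange-penalized maximizer
    is antitone in λ, under increasing value and decreasing value/cost ratio. -/
theorem stmt_3 (A : Finset ℝ) (hA : A.Nonempty) (v : ℝ → ℝ)
    (hpos : ∀ c ∈ A, 0 < c)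
    (hvpos : ∀ c ∈ A, 0 < v c)
    (hv : ∀ c₁ ∈ A, ∀ c₂ ∈ A, c₁ ≤ c₂ → v c₁ ≤ v c₂)
    (hratio : ∀ c₁ ∈ A, ∀ c₂ ∈ A, c₁ ≤ c₂ → v c₂ / c₂ ≤ v c₁ / c₁)
    (cstar : ℝ → ℝ)
    (hmem : ∀ lam : ℝ, cstar lam ∈ A)
    (hopt : ∀ lam : ℝ, ∀ c ∈ A, v c - lam * c ≤ v (cstar lam) - lam * cstar lam)
    (htie : ∀ lam : ℝ, ∀ c ∈ A,
      v c - lam * c = v (cstar lam) - lam * cstar lam → cstar lam ≤ c) :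
    ∀ lam₁ lam₂ : ℝ, 0 ≤ lam₁ → lam₁ ≤ lam₂ → v (cstar lam₂) ≤ v (cstar lam₁) := by
  intro lam₁ lam₂ _ hle
  rcases eq_or_lt_of_le hle with h | h
  · subst h; exact le_refl _
  · -- show cstar lam₂ ≤ cstar lam₁
    have h1 := hopt lam₁ (cstar lam₂) (hmem lam₂)
    have h2 := hopt lam₂ (cstar lam₁) (hmem lam₁)
    have key : (lam₂ - lam₁) * (cstar lam₂ - cstar lam₁) ≤ 0 := by nlinarith
    have hc : cstar lam₂ ≤ cstar lam₁ := by nlinarith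
    exact hv _ (hmem lam₂) _ (hmem lam₁) hc
end

section
/- Let I be a finite set, and for each i ∈ I let A_i ⊆ ℝ be a finite nonempty set of costs with value function v_i increasing on A_i. For λ ≥ 0 define Ĉ(λ) = ∑_i c_i*(λ), where c_i*(λ) is the smallest maximizer of v_i(c) − λ·c over A_i. Then Ĉ is antitone: λ₁ ≤ λ₂ implies Ĉ(λ₂) ≤ Ĉ(λ₁). -/
/-- The total computation cost Ĉ(λ) = ∑ᵢ cᵢ*(λ) of the per-request smallest
    Lagrange-penalized maximizers is antitone in λ. -/
theorem stmt_4 {I : Type*} [Fintype I]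
    (A : I → Finset ℝ) (hA : ∀ i, (A i).Nonempty) (v : I → ℝ → ℝ)
    (hv : ∀ i, ∀ c₁ ∈ A i, ∀ c₂ ∈ A i, c₁ ≤ c₂ → v i c₁ ≤ v i c₂)
    (cstar : I → ℝ → ℝ)
    (hmem : ∀ i, ∀ lam : ℝ, cstar i lam ∈ A i)
    (hopt : ∀ i, ∀ lam : ℝ, ∀ c ∈ A i,
      v i c - lam * c ≤ v i (cstar i lam) - lam * cstar i lam)
    (htie : ∀ i, ∀ lam : ℝ, ∀ c ∈ A i,
      v i c - lam * c = v i (cstar i lam) - lam * cstar i lam → cstar i lam ≤ c) :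
    ∀ lam₁ lam₂ : ℝ, 0 ≤ lam₁ → lam₁ ≤ lam₂ →
      ∑ i, cstar i lam₂ ≤ ∑ i, cstar i lam₁ := by
  intro lam₁ lam₂ h0 h12
  rcases eq_or_lt_of_le h12 with h | h
  · rw [h]
  · apply Finset.sum_le_sum
    intro i _
    have h1 := hopt i lam₁ (cstar i lam₂) (hmem i lam₂)
    have h2 := hopt i lam₂ (cstar i lam₁) (hmem i lam₁)
    nlinarith
end

section
/- Let I be finite and for each i let a_i*(λ) be the smallest-cost maximizer of Value(i,·) − λ·Cost(i,·) over a finite action set A, where for each i, Value(i,·) is injectively parameterized so that distinct actions have distinct costs and Value is increasing in Cost. Suppose additionally for each i the ratio Value(i,a)/Cost(i,a) is decreasing in Cost(i,a) and Cost > 0. Then the function λ ↦ ∑_i Value(i, a_i*(λ)) / ∑_i Cost(i, a_i*(λ)) need not be monotone, but each per-request ratio Value(i,a_i*(λ))/Cost(i,a_i*(λ)) is monotonically nondecreasing in λ. -/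
/-- Under decreasing value-to-cost ratio, the per-request efficiency
    Value/Cost of the smallest-cost Lagrange-optimal action is
    nondecreasing in the multiplier λ. -/
theorem stmt_12 {I A : Type*} [Fintype I] [Fintype A] [Nonempty A]
    (Value Cost : I → A → ℝ)
    (hCostpos : ∀ i a, 0 < Cost i a)
    (hCostinj : ∀ i, Function.Injective (Cost i))
    (hValueInc : ∀ i a b, Cost i a ≤ Cost i b → Value i a ≤ Value i b)
    (hRatioDec : ∀ i a b, Cost i a ≤ Cost i b →
      Value i b / Cost i b ≤ Value i a / Cost i a)
    (astar : I → ℝ → A)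
    (hopt : ∀ i, ∀ lam : ℝ, ∀ a : A,
      Value i a - lam * Cost i a ≤
        Value i (astar i lam) - lam * Cost i (astar i lam))
    (htie : ∀ i, ∀ lam : ℝ, ∀ a : A,
      Value i a - lam * Cost i a =
        Value i (astar i lam) - lam * Cost i (astar i lam) →
      Cost i (astar i lam) ≤ Cost i a) :
    ∀ i, ∀ lam₁ lam₂ : ℝ, 0 ≤ lam₁ → lam₁ ≤ lam₂ →
      Value i (astar i lam₁) / Cost i (astar i lam₁) ≤
        Value i (astar i lam₂) / Cost i (astar i lam₂) := by
  intro i lam₁ lam₂ _ hle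
  rcases eq_or_lt_of_le hle with rfl | hlt
  · exact le_refl _
  set a1 := astar i lam₁
  set a2 := astar i lam₂
  have h1 := hopt i lam₁ a2
  have h2 := hopt i lam₂ a1
  have hC : Cost i a2 ≤ Cost i a1 := by nlinarith
  exact hRatioDec i a2 a1 hC
end
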